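/- (Alvarez-Gaumé–Witten 12-dimensional miraculous cancellation formula, eq. (0.1), at the level of Chern roots.) In the formal power series ring ℚ[[x₁, …, x₆]], the homogeneous component of total degree 6 of Π_{j=1}^{6} (2cosh(xⱼ/2)·A(xⱼ)) - 8·Π_{j=1}^{6} A(xⱼ) · Σ_{j=1}^{6}(e^{xⱼ} + e^{-xⱼ}) + 32·Π_{j=1}^{6} A(xⱼ) equals 0. (This is the Chern-root form of {L̂(TX)}^{(12)} = 8{Â(TX)ch(T_ℂX)}^{(12)} - 32{Â(TX)}^{(12)} on a 12-dimensional manifold X, since the Chern roots of T_ℂX are ±xⱼ, L̂(TX) = Πⱼ xⱼ/tanh(xⱼ/2) = Πⱼ 2cosh(xⱼ/2)A(xⱼ), and ch(T_ℂX) = Σⱼ(e^{xⱼ} + e^{-xⱼ}).) -/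

import Mathlib

/-!
Every term of the formula is a sum of products `∏ⱼ fⱼ(xⱼ)` of univariate series, one in each
variable, and the coefficient of `x^m` in such a product is `∏ⱼ [x^{mⱼ}] fⱼ`. The hypothesis on
`A j` forces `A j = Â(xⱼ)`, since `xⱼ` is a non-zero-divisor. Hence the degree-6 coefficients are
polynomials in the Taylor coefficients up to order 6 of `Â`, `L̂ = 2cosh(x/2)·Â` and
`Â·2cosh x`; these are computed exactly, and the cancellation is checked for each of the 462
exponent vectors `m` with `|m| = 6`.
-/

open MvPowerSeries

/-- Formal exponential of a multivariate power series (with zero constant term):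
the coefficient of a monomial `m` in `exp S` is `Σ_k coeff m (S^k) / k!`. -/
noncomputable def mexp {σ : Type*} (S : MvPowerSeries σ ℚ) : MvPowerSeries σ ℚ :=
  fun m => ∑ k ∈ Finset.range ((m.sum fun _ e => e) + 1),
    ((k.factorial : ℚ))⁻¹ * MvPowerSeries.coeff m (S ^ k)

theorem Finset.prod_mul_sum_eq_sum_prod_ite {ι R : Type*} [CommSemiring R] [DecidableEq ι]
    (s : Finset ι) (f g : ι → R) :
    (∏ j ∈ s, f j) * ∑ k ∈ s, g k = ∑ k ∈ s, ∏ j ∈ s, if j = k then f j * g j else f j := by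
  rw [Finset.mul_sum]
  refine Finset.sum_congr rfl fun k hk => ?_
  have h (j : ι) : (if j = k then f j * g j else f j) = f j * if j = k then g j else 1 := by
    split_ifs <;> simp
  rw [Finset.prod_congr rfl fun j _ => h j, Finset.prod_mul_distrib, Finset.prod_ite_eq' s k,
    if_pos hk]

namespace PowerSeries

theorem subst_smul_X {σ R : Type*} [CommRing R] (c : R) (j : σ) (f : PowerSeries R) :
    f.subst (c • MvPowerSeries.X j : MvPowerSeries σ R) =
      (rescale c f).subst (MvPowerSeries.X j) := by
  rw [rescale_eq_subst, subst_comp_subst_apply (HasSubst.smul_X' c) (HasSubst.X j),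
    subst_smul (HasSubst.X j), subst_X (HasSubst.X j)]

theorem coeff_prod_subst_X {σ R : Type*} [Fintype σ] [DecidableEq σ] [CommRing R]
    (f : σ → PowerSeries R) (m : σ →₀ ℕ) :
    MvPowerSeries.coeff m (∏ j, (f j).subst (MvPowerSeries.X j : MvPowerSeries σ R)) =
      ∏ j, coeff (m j) (f j) := by
  set l₀ : σ →₀ σ →₀ ℕ := Finsupp.equivFunOnFinite.symm fun j => Finsupp.single j (m j)
  rw [MvPowerSeries.coeff_prod, Finset.sum_eq_single_of_mem l₀ (by simp [l₀])]
  · simp [l₀, coeff_subst_single]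
  · intro l hl hne
    by_contra hprod
    have hl_single (i : σ) : l i = Finsupp.single i (l i i) := by
      by_contra h
      exact hprod (Finset.prod_eq_zero (Finset.mem_univ i) (by simp [coeff_subst_single, h]))
    have hm (i : σ) : m i = l i i := by
      rw [← (Finset.mem_finsuppAntidiag.mp hl).1, Finset.sum_apply']
      conv_lhs => arg 2; ext k; rw [hl_single k]
      simp [Finsupp.single_apply]
    exact hne (Finsupp.ext fun i => by rw [hl_single i, ← hm i]; simp [l₀])

end PowerSeries

theorem mexp_eq_subst_exp {σ : Type*} {S : MvPowerSeries σ ℚ}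
    (hS : MvPowerSeries.constantCoeff S = 0) : mexp S = (PowerSeries.exp ℚ).subst S := by
  ext m
  rw [PowerSeries.coeff_subst (.of_constantCoeff_zero hS),
    finsum_eq_sum_of_support_subset (s := Finset.range (m.degree + 1))]
  · simp only [PowerSeries.coeff_exp, Algebra.algebraMap_self, RingHom.id_apply, one_div,
      smul_eq_mul]
    rfl
  · intro d hd
    contrapose! hd
    simp only [Finset.coe_range, Set.mem_Iio, not_lt] at hd
    rw [Function.notMem_support, MvPowerSeries.coeff_of_lt_order, smul_zero]
    exact (Nat.cast_lt.mpr hd).trans_le (le_order_pow_of_constantCoeff_eq_zero d hS)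

theorem mexp_smul_X {σ : Type*} (c : ℚ) (j : σ) :
    mexp (c • X j) =
      (PowerSeries.rescale c (PowerSeries.exp ℚ)).subst (X j : MvPowerSeries σ ℚ) := by
  rw [mexp_eq_subst_exp (by simp), PowerSeries.subst_smul_X]

namespace MiraculousCancellation

open PowerSeries

/-- `Σ x^{2m} / (4^m (2m+1)!)`, indexed by `n = 2m`. -/
noncomputable def sinhQuot : PowerSeries ℚ :=
  mk fun n => if Even n then ((2 : ℚ) ^ n * (n + 1).factorial)⁻¹ else 0

noncomputable def aHat : PowerSeries ℚ := sinhQuot⁻¹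

noncomputable def lHat : PowerSeries ℚ :=
  (rescale (2⁻¹ : ℚ) (exp ℚ) + rescale (-2⁻¹ : ℚ) (exp ℚ)) * aHat

noncomputable def aHatCh : PowerSeries ℚ := aHat * (exp ℚ + rescale (-1 : ℚ) (exp ℚ))

theorem X_mul_sinhQuot :
    PowerSeries.X * sinhQuot =
      PowerSeries.rescale (2⁻¹ : ℚ) (exp ℚ) - PowerSeries.rescale (-2⁻¹ : ℚ) (exp ℚ) := by
  ext (_ | n)
  · rw [PowerSeries.coeff_zero_X_mul, map_sub, PowerSeries.coeff_rescale,
      PowerSeries.coeff_rescale, pow_zero, pow_zero, sub_self]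
  · rw [PowerSeries.coeff_succ_X_mul, sinhQuot, coeff_mk, map_sub, PowerSeries.coeff_rescale,
      PowerSeries.coeff_rescale, coeff_exp, Algebra.algebraMap_self, RingHom.id_apply]
    rcases Nat.even_or_odd n with hn | hn
    · rw [if_pos hn, hn.add_one.neg_pow]
      field_simp
      rw [pow_succ, ← mul_assoc, ← mul_pow]
      norm_num
    · rw [if_neg (Nat.not_even_iff_odd.mpr hn), hn.add_one.neg_pow, sub_self]

theorem aHat_mul_sinhQuot : aHat * sinhQuot = 1 :=
  PowerSeries.inv_mul_cancel _ (by simp [sinhQuot])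

theorem eq_subst_aHat_of_mul_eq_X {σ : Type*} {A : MvPowerSeries σ ℚ} {j : σ}
    (hA : A * (mexp ((2 : ℚ)⁻¹ • X j) - mexp (-((2 : ℚ)⁻¹ • X j))) = X j) :
    A = aHat.subst (X j : MvPowerSeries σ ℚ) := by
  set φ := substAlgHom (R := ℚ) (HasSubst.X (S := ℚ) j)
  rw [← neg_smul, mexp_smul_X, mexp_smul_X, ← coe_substAlgHom (HasSubst.X j), ← map_sub,
    ← X_mul_sinhQuot, map_mul, PowerSeries.substAlgHom_X] at hA
  have h1 : A * φ sinhQuot = 1 :=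
    mul_left_cancel₀ (nonZeroDivisors.ne_zero MvPowerSeries.X_mem_nonzeroDivisors)
      (by linear_combination hA)
  have h2 : φ sinhQuot * φ aHat = 1 := by rw [← map_mul, mul_comm, aHat_mul_sinhQuot, map_one]
  rw [left_inv_eq_right_inv h1 h2, PowerSeries.coe_substAlgHom]

def aHatCoeffs (n : ℕ) : ℚ := [1, 0, -1/24, 0, 7/5760, 0, -31/967680].getD n 0

def lHatCoeffs (n : ℕ) : ℚ := [2, 0, 1/6, 0, -1/360, 0, 1/15120].getD n 0

def aHatChCoeffs (n : ℕ) : ℚ := [2, 0, 11/12, 0, 127/2880, 0, 221/483840].getD n 0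

theorem coeff_aHat {n : ℕ} (hn : n ≤ 6) : PowerSeries.coeff n aHat = aHatCoeffs n := by
  have key (k : ℕ) :
      ∑ i ∈ Finset.range (k + 1), PowerSeries.coeff i aHat * PowerSeries.coeff (k - i) sinhQuot =
        if k = 0 then 1 else 0 := by
    have h := congrArg (PowerSeries.coeff k) aHat_mul_sinhQuot
    rwa [PowerSeries.coeff_mul, Finset.Nat.sum_antidiagonal_eq_sum_range_succ
      (fun i j => PowerSeries.coeff i aHat * PowerSeries.coeff j sinhQuot),
      PowerSeries.coeff_one] at h
  have h0 := key 0; have h1 := key 1; have h2 := key 2; have h3 := key 3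
  have h4 := key 4; have h5 := key 5; have h6 := key 6
  norm_num [Finset.sum_range_succ, sinhQuot, Nat.factorial] at h0 h1 h2 h3 h4 h5 h6
  interval_cases n <;> simp [aHatCoeffs] <;> linarith

theorem coeff_lHat {n : ℕ} (hn : n ≤ 6) : PowerSeries.coeff n lHat = lHatCoeffs n := by
  rw [lHat, PowerSeries.coeff_mul, Finset.Nat.sum_antidiagonal_eq_sum_range_succ
    (fun i j => PowerSeries.coeff i _ * PowerSeries.coeff j aHat)]
  interval_cases n <;>
    norm_num [Finset.sum_range_succ, PowerSeries.coeff_rescale,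
      -PowerSeries.coeff_zero_eq_constantCoeff, coeff_exp, coeff_aHat, lHatCoeffs, aHatCoeffs,
      Nat.factorial]

theorem coeff_aHatCh {n : ℕ} (hn : n ≤ 6) : PowerSeries.coeff n aHatCh = aHatChCoeffs n := by
  rw [aHatCh, PowerSeries.coeff_mul, Finset.Nat.sum_antidiagonal_eq_sum_range_succ
    (fun i j => PowerSeries.coeff i aHat * PowerSeries.coeff j _)]
  interval_cases n <;>
    norm_num [Finset.sum_range_succ, PowerSeries.coeff_rescale,
      -PowerSeries.coeff_zero_eq_constantCoeff, coeff_exp, coeff_aHat, aHatChCoeffs, aHatCoeffs,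
      Nat.factorial]

theorem table_cancellation : ∀ m ∈ Finset.Nat.antidiagonalTuple 6 6,
    ∏ j, lHatCoeffs (m j)
      - 8 * ∑ k, ∏ j, (if j = k then aHatChCoeffs (m j) else aHatCoeffs (m j))
      + 32 * ∏ j, aHatCoeffs (m j) = 0 := by
  decide +kernel

theorem coeff_degree_six_cancellation {m : Fin 6 → ℕ} (hm : ∑ j, m j = 6) :
    ∏ j, PowerSeries.coeff (m j) lHat
      - 8 * ∑ k, ∏ j, PowerSeries.coeff (m j) (if j = k then aHatCh else aHat)
      + 32 * ∏ j, PowerSeries.coeff (m j) aHat = 0 := by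
  have hle (j : Fin 6) : m j ≤ 6 :=
    hm ▸ Finset.single_le_sum (fun _ _ => Nat.zero_le _) (Finset.mem_univ j)
  have hl (j : Fin 6) := coeff_lHat (hle j)
  have ha (j : Fin 6) := coeff_aHat (hle j)
  have hh (j : Fin 6) := coeff_aHatCh (hle j)
  simp only [apply_ite (PowerSeries.coeff _), hl, ha, hh]
  exact table_cancellation m (Finset.Nat.mem_antidiagonalTuple.mpr hm)

end MiraculousCancellation

open MiraculousCancellation

/-- The Alvarez-Gaumé–Witten 12-dimensional miraculous cancellation formula (eq. (0.1)),
`{L̂(TX)}^{(12)} = 8{Â(TX) ch(T_ℂX)}^{(12)} - 32{Â(TX)}^{(12)}`, at the level of Chern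
roots `±xⱼ` of `T_ℂX` (`dim X = 12`): the degree-6 homogeneous component of
`Π(2cosh(xⱼ/2)A(xⱼ)) - 8 ΠA(xⱼ) Σ(e^{xⱼ}+e^{-xⱼ}) + 32 ΠA(xⱼ)` vanishes.
`A j` is the Â-series of `xⱼ`, characterized by `A(x)(e^{x/2} - e^{-x/2}) = x`. -/
theorem miraculous_cancellation_dim12
    (A : Fin 6 → MvPowerSeries (Fin 6) ℚ)
    (hA : ∀ j, A j * (mexp ((2 : ℚ)⁻¹ • X j) - mexp (-((2 : ℚ)⁻¹ • X j))) = X j)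
    (m : Fin 6 →₀ ℕ) (hm : (m.sum fun _ e => e) = 6) :
    MvPowerSeries.coeff m
      ((∏ j, (mexp ((2 : ℚ)⁻¹ • X j) + mexp (-((2 : ℚ)⁻¹ • X j))) * A j)
        - 8 * (∏ j, A j) * (∑ j, (mexp (X j) + mexp (-X j)))
        + 32 * ∏ j, A j)
    = 0 := by
  have hAj (j : Fin 6) : A j = aHat.subst (X j) := eq_subst_aHat_of_mul_eq_X (hA j)
  have hL (j : Fin 6) :
      (mexp ((2 : ℚ)⁻¹ • X j) + mexp (-((2 : ℚ)⁻¹ • X j))) * A j = lHat.subst (X j) := by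
    rw [← neg_smul, mexp_smul_X, mexp_smul_X, hAj j, ← PowerSeries.coe_substAlgHom (.X j),
      ← map_add, ← map_mul, lHat]
  have hCh (k : Fin 6) :
      ∏ j, (if j = k then A j * (mexp (X j) + mexp (-X j)) else A j) =
        ∏ j, (if j = k then aHatCh else aHat).subst (X j) := by
    refine Finset.prod_congr rfl fun j _ => ?_
    split_ifs
    · rw [← neg_one_smul ℚ (X j), mexp_smul_X, mexp_eq_subst_exp (by simp), hAj j,
        ← PowerSeries.coe_substAlgHom (.X j), ← map_add, ← map_mul, aHatCh]
    · exact hAj j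
  simp only [hL]
  rw [mul_assoc, Finset.prod_mul_sum_eq_sum_prod_ite]
  simp only [hCh]
  simp only [hAj]
  rw [← map_ofNat (MvPowerSeries.C (σ := Fin 6) (R := ℚ)) 8,
    ← map_ofNat (MvPowerSeries.C (σ := Fin 6) (R := ℚ)) 32, map_add, map_sub,
    MvPowerSeries.coeff_C_mul, MvPowerSeries.coeff_C_mul, map_sum]
  simp only [PowerSeries.coeff_prod_subst_X]
  exact coeff_degree_six_cancellation (by rwa [Finsupp.sum_fintype _ _ fun _ => rfl] at hm)
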